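/- arXiv:1809.00568 — 3 statements merged into one kernel-verified Lean document; each statement's English description precedes it below -/
import Mathlib

section
/- Let C be a linear code of length n and dimension l over F_q with parity check matrix H (an (n-l) × n matrix of rank n-l whose kernel is C), and let 0 ≤ k < e where q = p^e. Then rank(H H^‡) = n - l - dim(C ∩ C^{⊥_k}), where H^‡ is the transpose of the matrix obtained from H by raising every entry to the power p^{e-k}. -/
open Finset

/-- The `k`-Galois dual of a linear code `C ⊆ F_q^n`, where `q = p^e`:
`C^{⊥_k} = {x | ∀ c ∈ C, ∑ i, c i * (x i)^(p^k) = 0}`. -/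
def galoisDual (p k : ℕ) [Fact p.Prime] {F : Type*} [Field F] [CharP F p] {n : ℕ}
    (C : Submodule F (Fin n → F)) : Submodule F (Fin n → F) where
  carrier := {x | ∀ c ∈ C, ∑ i, c i * x i ^ p ^ k = 0}
  zero_mem' := fun c _ => by
    simp [zero_pow (pow_pos (Nat.Prime.pos (Fact.out : p.Prime)) k).ne']
  add_mem' := by
    intro x y hx hy c hc
    have hpow : ∀ i : Fin n, (x + y) i ^ p ^ k = x i ^ p ^ k + y i ^ p ^ k := fun i => by
      simpa using add_pow_char_pow (x i) (y i) p k
    calc ∑ i, c i * (x + y) i ^ p ^ k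
        = ∑ i, (c i * x i ^ p ^ k + c i * y i ^ p ^ k) := by
          refine Finset.sum_congr rfl fun i _ => by rw [hpow i, mul_add]
      _ = 0 := by
          rw [Finset.sum_add_distrib, hx c hc, hy c hc, add_zero]
  smul_mem' := by
    intro a x hx c hc
    calc ∑ i, c i * (a • x) i ^ p ^ k
        = a ^ p ^ k * ∑ i, c i * x i ^ p ^ k := by
          rw [Finset.mul_sum]
          refine Finset.sum_congr rfl fun i _ => by
            simp only [Pi.smul_apply, smul_eq_mul, mul_pow]; ring
      _ = 0 := by rw [hx c hc, mul_zero]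

/-- A linear code `C` is a `k`-Galois LCD code if `C ∩ C^{⊥_k} = {0}`. -/
def IsGaloisLCD (p k : ℕ) [Fact p.Prime] {F : Type*} [Field F] [CharP F p] {n : ℕ}
    (C : Submodule F (Fin n → F)) : Prop :=
  C ⊓ galoisDual p k C = ⊥

/-- `C` has minimum Hamming distance `d`. -/
def IsMinDist {F : Type*} [Field F] [DecidableEq F] {n : ℕ}
    (C : Submodule F (Fin n → F)) (d : ℕ) : Prop :=
  (∃ x ∈ C, x ≠ 0 ∧ hammingNorm x = d) ∧ ∀ x ∈ C, x ≠ 0 → d ≤ hammingNorm x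

/-- `C` is an MDS code: the trivial code `{0}` counts as MDS, otherwise
the minimum distance is `n - dim C + 1`. -/
def IsMDS {F : Type*} [Field F] [DecidableEq F] {n : ℕ} (C : Submodule F (Fin n → F)) : Prop :=
  C = ⊥ ∨ IsMinDist C (n - Module.finrank F C + 1)

/-- `C` is `λ`-constacyclic: `(λ c_n, c_1, …, c_{n-1}) ∈ C` whenever `(c_1, …, c_n) ∈ C`. -/
def IsConstacyclic {F : Type*} [Field F] {n : ℕ} (lam : F) (C : Submodule F (Fin n → F)) : Prop :=
  ∀ c ∈ C, (fun i : Fin n => if (i : ℕ) = 0 then lam * c ⟨n - 1, by have := i.isLt; omega⟩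
    else c ⟨(i : ℕ) - 1, by have := i.isLt; omega⟩) ∈ C

/-- The Euclidean dual of a linear code. -/
def euclideanDual {F : Type*} [Field F] {n : ℕ}
    (C : Submodule F (Fin n → F)) : Submodule F (Fin n → F) where
  carrier := {x | ∀ c ∈ C, ∑ i, c i * x i = 0}
  zero_mem' := fun c _ => by simp
  add_mem' := by
    intro x y hx hy c hc
    calc ∑ i, c i * (x + y) i = ∑ i, (c i * x i + c i * y i) := by
          refine Finset.sum_congr rfl fun i _ => by simp [mul_add]
      _ = 0 := by rw [Finset.sum_add_distrib, hx c hc, hy c hc, add_zero]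
  smul_mem' := by
    intro a x hx c hc
    calc ∑ i, c i * (a • x) i = a * ∑ i, c i * x i := by
          rw [Finset.mul_sum]
          refine Finset.sum_congr rfl fun i _ => by
            simp only [Pi.smul_apply, smul_eq_mul]; ring
      _ = 0 := by rw [hx c hc, mul_zero]

/-- The coordinatewise `p^m`-power map `x ↦ (x_i^{p^m})_i`, as a semilinear map
with respect to the iterated Frobenius. -/
def frobPowMap (p m : ℕ) [Fact p.Prime] (F : Type*) [Field F] [CharP F p] (n : ℕ) :
    (Fin n → F) →ₛₗ[iterateFrobenius F p m] (Fin n → F) where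
  toFun x := fun i => x i ^ p ^ m
  map_add' x y := funext fun i => by simpa using add_pow_char_pow (x i) (y i) p m
  map_smul' a x := funext fun i => by
    simp [iterateFrobenius_def, mul_pow]

/-! With `φ = (·)^{p^{e-k}}` and `ψ = (·)^{p^k}` applied coordinatewise, which are mutually
inverse on `F_{p^e}`, one has `H^‡ = φ ∘ Hᵀ ∘ ψ`. So `H^‡` is injective because `H` has full row
rank, and its range is `ψ⁻¹(range Hᵀ) = ψ⁻¹(C^⊥) = C^{⊥_k}`. The kernel of `H H^‡` is
`(H^‡)⁻¹(C)`, which `H^‡` maps isomorphically onto `C ∩ C^{⊥_k}`; rank–nullity concludes. -/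

open Module Matrix

namespace LinearMap

variable {K V W U : Type*} [Field K] [AddCommGroup V] [Module K V] [AddCommGroup W] [Module K W]
  [AddCommGroup U] [Module K U]

theorem finrank_ker_comp_of_injective (f : V →ₗ[K] W) (g : W →ₗ[K] U) (hf : Function.Injective f) :
    finrank K (ker (g ∘ₗ f)) = finrank K ↥(ker g ⊓ range f) := by
  rw [ker_comp, inf_comm, ← Submodule.map_comap_eq]
  exact (Submodule.equivMapOfInjective f hf _).finrank_eq

end LinearMap

namespace Matrix

variable {K : Type*} [Field K] {l m : Type*} [Fintype l] [Fintype m]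

theorem rank_mul_add_finrank_ker_inf_range (A : Matrix l m K) (B : Matrix m l K)
    (hB : Function.Injective B.mulVecLin) :
    (A * B).rank + finrank K ↥(LinearMap.ker A.mulVecLin ⊓ LinearMap.range B.mulVecLin)
      = Fintype.card l := by
  rw [← LinearMap.finrank_ker_comp_of_injective _ _ hB, ← mulVecLin_mul, rank,
    LinearMap.finrank_range_add_finrank_ker, finrank_fintype_fun_eq_card]

theorem mulVecLin_transpose_injective_of_rank_eq (A : Matrix l m K)
    (hA : A.rank = Fintype.card l) : Function.Injective Aᵀ.mulVecLin := by
  have h := Aᵀ.mulVecLin.finrank_range_add_finrank_ker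
  rw [← rank, rank_transpose, hA, finrank_fintype_fun_eq_card] at h
  exact LinearMap.ker_eq_bot.mp (Submodule.finrank_eq_zero.mp (by omega))

end Matrix

section EuclideanDual

variable {F : Type*} [Field F] {n : ℕ}

theorem euclideanDual_eq_comap_dualAnnihilator (C : Submodule F (Fin n → F)) :
    euclideanDual C = C.dualAnnihilator.comap (dotProductEquiv F (Fin n)).toLinearMap := by
  ext x
  simp only [Submodule.mem_comap, Submodule.mem_dualAnnihilator]
  exact forall₂_congr fun c _ => by
    change c ⬝ᵥ x = 0 ↔ x ⬝ᵥ c = 0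
    rw [dotProduct_comm]

theorem finrank_euclideanDual_add_finrank (C : Submodule F (Fin n → F)) :
    finrank F (euclideanDual C) + finrank F C = n := by
  rw [euclideanDual_eq_comap_dualAnnihilator, Submodule.comap_equiv_eq_map_symm,
    LinearEquiv.finrank_map_eq, add_comm, Subspace.finrank_add_finrank_dualAnnihilator_eq,
    finrank_fin_fun]

theorem euclideanDual_ker_mulVecLin {m : Type*} [Fintype m] (H : Matrix m (Fin n) F) :
    euclideanDual (LinearMap.ker H.mulVecLin) = LinearMap.range Hᵀ.mulVecLin := by
  have hle : LinearMap.range Hᵀ.mulVecLin ≤ euclideanDual (LinearMap.ker H.mulVecLin) := by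
    rintro _ ⟨u, rfl⟩ c hc
    have hc : H *ᵥ c = 0 := hc
    change c ⬝ᵥ Hᵀ *ᵥ u = 0
    rw [dotProduct_mulVec, vecMul_transpose, hc, zero_dotProduct]
  refine (Submodule.eq_of_le_of_finrank_le hle ?_).symm
  have hdual := finrank_euclideanDual_add_finrank (LinearMap.ker H.mulVecLin)
  have hH := H.mulVecLin.finrank_range_add_finrank_ker
  rw [finrank_fin_fun] at hH
  change _ ≤ Hᵀ.rank
  rw [rank_transpose, rank]
  omega

end EuclideanDual

section Frobenius

variable {p : ℕ} [Fact p.Prime] {F : Type*} [Field F] [CharP F p]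

theorem frobPowMap_apply {n : ℕ} (j : ℕ) (x : Fin n → F) (i : Fin n) :
    frobPowMap p j F n x i = x i ^ p ^ j := rfl

theorem frobPowMap_frobPowMap {n : ℕ} (i j : ℕ) (x : Fin n → F) :
    frobPowMap p i F n (frobPowMap p j F n x) = frobPowMap p (j + i) F n x :=
  funext fun _ => by simp only [frobPowMap_apply, ← pow_mul, ← pow_add]

theorem frobPowMap_mulVec {a b : ℕ} (j : ℕ) (M : Matrix (Fin a) (Fin b) F) (v : Fin b → F) :
    frobPowMap p j F a (M *ᵥ v) = M.map (· ^ p ^ j) *ᵥ frobPowMap p j F b v :=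
  funext <| (iterateFrobenius F p j).map_mulVec M v

theorem frobPowMap_frobPowMap_of_add_eq [Fintype F] {e n i j : ℕ} (hF : Fintype.card F = p ^ e)
    (hij : j + i = e) (x : Fin n → F) : frobPowMap p i F n (frobPowMap p j F n x) = x :=
  funext fun _ => by rw [frobPowMap_frobPowMap, frobPowMap_apply, hij, ← hF, FiniteField.pow_card]

theorem mem_galoisDual_iff_frobPowMap_mem {k n : ℕ} {C : Submodule F (Fin n → F)}
    {x : Fin n → F} : x ∈ galoisDual p k C ↔ frobPowMap p k F n x ∈ euclideanDual C :=
  Iff.rfl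

end Frobenius

section GaloisDual

variable {p : ℕ} [Fact p.Prime] {F : Type*} [Field F] [Fintype F] [CharP F p] {e k m n : ℕ}

theorem mulVec_map_transpose_eq (hF : Fintype.card F = p ^ e) (hk : k ≤ e)
    (H : Matrix (Fin m) (Fin n) F) (v : Fin m → F) :
    (H.map (· ^ p ^ (e - k)))ᵀ *ᵥ v = frobPowMap p (e - k) F n (Hᵀ *ᵥ frobPowMap p k F m v) := by
  rw [frobPowMap_mulVec, frobPowMap_frobPowMap_of_add_eq hF (Nat.add_sub_cancel' hk),
    transpose_map]

theorem mulVecLin_map_transpose_injective (hF : Fintype.card F = p ^ e) (hk : k ≤ e)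
    (H : Matrix (Fin m) (Fin n) F) (hH : Function.Injective Hᵀ.mulVecLin) :
    Function.Injective (H.map (· ^ p ^ (e - k)))ᵀ.mulVecLin := by
  have hφ : Function.Injective (frobPowMap p (e - k) F n) :=
    Function.LeftInverse.injective (frobPowMap_frobPowMap_of_add_eq hF (Nat.sub_add_cancel hk))
  have hψ : Function.Injective (frobPowMap p k F m) :=
    Function.LeftInverse.injective (frobPowMap_frobPowMap_of_add_eq hF (Nat.add_sub_cancel' hk))
  intro v w hvw
  simp only [mulVecLin_apply, mulVec_map_transpose_eq hF hk] at hvw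
  exact hψ (hH (hφ hvw))

theorem range_mulVecLin_map_transpose (hF : Fintype.card F = p ^ e) (hk : k ≤ e)
    (H : Matrix (Fin m) (Fin n) F) :
    LinearMap.range (H.map (· ^ p ^ (e - k)))ᵀ.mulVecLin
      = galoisDual p k (LinearMap.ker H.mulVecLin) := by
  ext x
  rw [mem_galoisDual_iff_frobPowMap_mem, euclideanDual_ker_mulVecLin]
  constructor
  · rintro ⟨v, rfl⟩
    refine ⟨frobPowMap p k F m v, ?_⟩
    rw [mulVecLin_apply, mulVecLin_apply, mulVec_map_transpose_eq hF hk,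
      frobPowMap_frobPowMap_of_add_eq hF (Nat.sub_add_cancel hk)]
  · rintro ⟨u, hu⟩
    refine ⟨frobPowMap p (e - k) F m u, ?_⟩
    rw [mulVecLin_apply, mulVec_map_transpose_eq hF hk,
      frobPowMap_frobPowMap_of_add_eq hF (Nat.sub_add_cancel hk), ← mulVecLin_apply, hu,
      frobPowMap_frobPowMap_of_add_eq hF (Nat.add_sub_cancel' hk)]

end GaloisDual

theorem rank_parity_check_mul_dagger_general
    (p e k : ℕ) [Fact p.Prime] (hk : k < e)
    (F : Type*) [Field F] [Fintype F] [CharP F p]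
    (hF : Fintype.card F = p ^ e)
    {n l : ℕ} (C : Submodule F (Fin n → F))
    (H : Matrix (Fin (n - l)) (Fin n) F)
    (hrank : H.rank = n - l)
    (hker : ∀ x : Fin n → F, x ∈ C ↔ H.mulVec x = 0) :
    (H * (H.map (fun a => a ^ p ^ (e - k))).transpose).rank
      = n - l - Module.finrank F ↥(C ⊓ galoisDual p k C) := by
  have hC : C = LinearMap.ker H.mulVecLin := Submodule.ext hker
  have hHinj := H.mulVecLin_transpose_injective_of_rank_eq (hrank.trans (Fintype.card_fin _).symm)
  have h := H.rank_mul_add_finrank_ker_inf_range _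
    (mulVecLin_map_transpose_injective hF hk.le H hHinj)
  rw [range_mulVecLin_map_transpose hF hk.le, ← hC, Fintype.card_fin] at h
  omega

/-- If `H` is a parity check matrix of an `[n, l]` code `C` over `F_q` (`q = p^e`,
`0 ≤ k < e`), then `rank (H H^‡) = n - l - dim (C ∩ C^{⊥_k})`, where `H^‡` is the
transpose of the entrywise `p^{e-k}`-th power of `H`. -/
theorem rank_parity_check_mul_dagger
    (p e k : ℕ) [Fact p.Prime] (hk : k < e)
    (F : Type*) [Field F] [Fintype F] [CharP F p]
    (hF : Fintype.card F = p ^ e)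
    {n l : ℕ} (hln : l ≤ n) (C : Submodule F (Fin n → F)) (hdim : Module.finrank F C = l)
    (H : Matrix (Fin (n - l)) (Fin n) F)
    (hrank : H.rank = n - l)
    (hker : ∀ x : Fin n → F, x ∈ C ↔ H.mulVec x = 0) :
    (H * (H.map (fun a => a ^ p ^ (e - k))).transpose).rank
      = n - l - Module.finrank F ↥(C ⊓ galoisDual p k C) :=
  rank_parity_check_mul_dagger_general p e k hk F hF C H hrank hker
end

section
/- Let q = p^e, 0 ≤ k < e, let n be coprime to q, and let λ ∈ F_q^* be a primitive r-th root of unity. If λ^{1+p^{e-k}} ≠ 1 (equivalently, r divides p^e - 1 but r does not divide 1 + p^{e-k}), then every λ-constacyclic code C of length n over F_q is a k-Galois LCD code, i.e., C ∩ C^{⊥_k} = {0}. -/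
open Finset

/-
Through `h ↦ h(T) e₀`, where `T` is the `λ`-constacyclic shift, `F_q[X] ⧸ (X^n - λ)` is identified
with `F_q^n` and a `λ`-constacyclic code `C` becomes an ideal: `C` consists of the words whose
polynomials are divisible by a divisor `g` of `X^n - λ` of degree `n - dim C`.
The `k`-Galois dual of `C` is `μ`-constacyclic for `μ = λ^{-p^{e-k}}`, because
`λ μ^{p^k} = λ / λ^{p^e} = 1`, and it has dimension `n - dim C`, since `x ↦ x^{p^k}` maps it
bijectively onto the Euclidean dual. Now `λ^{1+p^{e-k}} ≠ 1` says exactly `μ ≠ λ`, so `X^n - λ`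
and `X^n - μ` are coprime, hence so are the generators `g, g'` of `C` and of its dual. A word in
both codes has a polynomial of degree `< n` divisible by `g g'`, which has degree `n`; so it is zero.
-/

open Polynomial Module

section Shift

variable {F : Type*} [Field F]

def constaShift {n : ℕ} (lam : F) : (Fin n → F) →ₗ[F] Fin n → F where
  toFun c i := if (i : ℕ) = 0 then lam * c ⟨n - 1, by have := i.isLt; omega⟩
    else c ⟨(i : ℕ) - 1, by have := i.isLt; omega⟩
  map_add' a b := by
    funext i; by_cases h : (i : ℕ) = 0 <;> simp [h, mul_add]
  map_smul' r a := by
    funext i; by_cases h : (i : ℕ) = 0 <;> simp [h, mul_left_comm]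

variable {m : ℕ} (lam : F)

@[simp]
theorem constaShift_apply_zero (c : Fin (m + 1) → F) :
    constaShift lam c 0 = lam * c (Fin.last m) :=
  rfl

@[simp]
theorem constaShift_apply_succ (c : Fin (m + 1) → F) (i : Fin m) :
    constaShift lam c i.succ = c i.castSucc :=
  rfl

theorem constaShift_single_castSucc (i : Fin m) (a : F) :
    constaShift lam (Pi.single i.castSucc a) = Pi.single i.succ a := by
  funext j
  cases j using Fin.cases with
  | zero => simp [(Fin.castSucc_lt_last i).ne]
  | succ j => simp [Pi.single_apply]

theorem constaShift_single_last (a : F) :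
    constaShift lam (Pi.single (Fin.last m) a) = Pi.single 0 (lam * a) := by
  funext j
  cases j using Fin.cases with
  | zero => simp
  | succ j => simp [(Fin.castSucc_lt_last j).ne, Fin.succ_ne_zero]

theorem constaShift_pow_single_zero (i : Fin (m + 1)) (a : F) :
    (constaShift lam ^ (i : ℕ)) (Pi.single 0 a) = Pi.single i a := by
  induction i using Fin.induction with
  | zero => simp
  | succ i ih =>
    rw [Fin.val_succ, pow_succ', Module.End.mul_apply, ← Fin.val_castSucc, ih,
      constaShift_single_castSucc]

theorem constaShift_injective {lam : F} (hlam : lam ≠ 0) :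
    Function.Injective (constaShift (n := m + 1) lam) := by
  refine (injective_iff_map_eq_zero _).2 fun c hc => funext fun j => ?_
  cases j using Fin.lastCases with
  | last => simpa [hlam] using congrFun hc 0
  | cast i => simpa using congrFun hc i.succ

end Shift

theorem sum_constaShift_mul_constaShift_pow {F : Type*} [Field F] {m q : ℕ} {lam mu : F}
    (hlm : lam * mu ^ q = 1) (c x : Fin (m + 1) → F) :
    ∑ i, constaShift lam c i * constaShift mu x i ^ q = ∑ i, c i * x i ^ q := by
  rw [Fin.sum_univ_succ, Fin.sum_univ_castSucc, add_comm]
  simp only [constaShift_apply_zero, constaShift_apply_succ, mul_pow]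
  linear_combination c (Fin.last m) * x (Fin.last m) ^ q * hlm

theorem IsConstacyclic.exists_constaShift_eq {F : Type*} [Field F] {m : ℕ} {lam : F}
    (hlam : lam ≠ 0) {C : Submodule F (Fin (m + 1) → F)} (hC : IsConstacyclic lam C)
    {c : Fin (m + 1) → F} (hc : c ∈ C) : ∃ c' ∈ C, constaShift lam c' = c := by
  have hsurj : Function.Surjective ((constaShift lam).restrict hC) :=
    LinearMap.injective_iff_surjective.1 fun a b hab =>
      Subtype.ext (constaShift_injective hlam (congrArg Subtype.val hab))
  obtain ⟨⟨c', hc'⟩, h⟩ := hsurj ⟨c, hc⟩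
  exact ⟨c', hc', congrArg Subtype.val h⟩

section Polynomial

variable {F : Type*} [Field F]

noncomputable def toPoly {n : ℕ} (x : Fin n → F) : F[X] :=
  ∑ i, C (x i) * X ^ (i : ℕ)

theorem degree_toPoly_lt {n : ℕ} (x : Fin n → F) : (toPoly x).degree < n :=
  degree_sum_fin_lt x

variable {m : ℕ} (lam : F)

theorem aeval_constaShift_toPoly (x : Fin (m + 1) → F) :
    aeval (constaShift lam) (toPoly x) (Pi.single 0 1) = x := by
  simp [toPoly, constaShift_pow_single_zero, ← Pi.single_smul', Finset.univ_sum_single]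

theorem aeval_constaShift_X_pow_sub_C :
    aeval (constaShift lam) (X ^ (m + 1) - C lam) (Pi.single (0 : Fin (m + 1)) 1) = 0 := by
  have h := constaShift_pow_single_zero lam (Fin.last m) 1
  rw [Fin.val_last] at h
  simp [pow_succ', h, constaShift_single_last, ← Pi.single_smul']

theorem toPoly_eq_zero_iff {x : Fin (m + 1) → F} : toPoly x = 0 ↔ x = 0 := by
  refine ⟨fun h => ?_, fun h => by simp [h, toPoly]⟩
  rw [← aeval_constaShift_toPoly 1 x, h, map_zero, LinearMap.zero_apply]

theorem isCoprime_X_pow_sub_C {n : ℕ} {a b : F} (hab : a ≠ b) :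
    IsCoprime (X ^ n - C a : F[X]) (X ^ n - C b) := by
  have h : C (b - a)⁻¹ * (C b - C a) = 1 := by
    rw [← C_sub, ← C_mul, inv_mul_cancel₀ (sub_ne_zero.2 hab.symm), C_1]
  exact ⟨C (b - a)⁻¹, -C (b - a)⁻¹, by linear_combination h⟩

end Polynomial

namespace IsConstacyclic

variable {F : Type*} [Field F] {m : ℕ} {lam : F} {C : Submodule F (Fin (m + 1) → F)}

def ideal (hC : IsConstacyclic lam C) : Ideal F[X] where
  carrier := {h | aeval (constaShift lam) h (Pi.single 0 1) ∈ C}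
  add_mem' {g h} hg hh := by
    simpa only [Set.mem_ofPred_eq, map_add, LinearMap.add_apply] using C.add_mem hg hh
  zero_mem' := by simp
  smul_mem' g h hh := by
    simpa only [Set.mem_ofPred_eq, smul_eq_mul, map_mul, Module.End.mul_apply] using
      aeval_apply_smul_mem_of_le_comap hh g (constaShift lam) hC

theorem mem_ideal_iff (hC : IsConstacyclic lam C) {h : F[X]} :
    h ∈ hC.ideal ↔ aeval (constaShift lam) h (Pi.single 0 1) ∈ C :=
  Iff.rfl

theorem toPoly_mem_ideal_iff (hC : IsConstacyclic lam C) {x : Fin (m + 1) → F} :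
    toPoly x ∈ hC.ideal ↔ x ∈ C := by
  rw [mem_ideal_iff, aeval_constaShift_toPoly]

theorem X_pow_sub_C_mem_ideal (hC : IsConstacyclic lam C) :
    X ^ (m + 1) - Polynomial.C lam ∈ hC.ideal := by
  rw [mem_ideal_iff, aeval_constaShift_X_pow_sub_C]
  exact C.zero_mem

theorem finrank_quotient_ideal_add_finrank (hC : IsConstacyclic lam C) :
    finrank F (F[X] ⧸ hC.ideal) + finrank F C = m + 1 := by
  let ev : F[X] →ₗ[F] (Fin (m + 1) → F) :=
    LinearMap.applyₗ (Pi.single 0 1) ∘ₗ (aeval (constaShift lam)).toLinearMap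
  have hev : Function.Surjective (C.mkQ ∘ₗ ev) := fun y => by
    obtain ⟨x, rfl⟩ := C.mkQ_surjective y
    exact ⟨toPoly x, by simp [ev, aeval_constaShift_toPoly]⟩
  have hker : LinearMap.ker (C.mkQ ∘ₗ ev) = hC.ideal.restrictScalars F := by
    rw [LinearMap.ker_comp, Submodule.ker_mkQ]
    rfl
  have e : (F[X] ⧸ hC.ideal) ≃ₗ[F] (Fin (m + 1) → F) ⧸ C :=
    (Submodule.Quotient.restrictScalarsEquiv F hC.ideal).symm ≪≫ₗ
      Submodule.quotEquivOfEq _ _ hker.symm ≪≫ₗ (C.mkQ ∘ₗ ev).quotKerEquivOfSurjective hev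
  rw [e.finrank_eq, Submodule.finrank_quotient_add_finrank, finrank_fin_fun]

theorem exists_generator (hC : IsConstacyclic lam C) :
    ∃ g : F[X], g ∣ X ^ (m + 1) - Polynomial.C lam ∧ g.natDegree + finrank F C = m + 1 ∧
      ∀ x, x ∈ C ↔ g ∣ toPoly x := by
  set g := Submodule.IsPrincipal.generator hC.ideal
  have hspan : Ideal.span {g} = hC.ideal := Ideal.span_singleton_generator _
  have hmem (h : F[X]) : h ∈ hC.ideal ↔ g ∣ h := by rw [← hspan, Ideal.mem_span_singleton]
  refine ⟨g, (hmem _).1 hC.X_pow_sub_C_mem_ideal, ?_, fun x => ?_⟩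
  · rw [← finrank_quotient_span_eq_natDegree, hspan, hC.finrank_quotient_ideal_add_finrank]
  · rw [← hmem, hC.toPoly_mem_ideal_iff]

end IsConstacyclic

theorem IsConstacyclic.inf_eq_bot {F : Type*} [Field F] {n : ℕ} {lam mu : F} (hlm : lam ≠ mu)
    {C D : Submodule F (Fin n → F)} (hC : IsConstacyclic lam C) (hD : IsConstacyclic mu D)
    (hdim : finrank F C + finrank F D ≤ n) : C ⊓ D = ⊥ := by
  obtain _ | m := n
  · exact Subsingleton.elim _ _
  obtain ⟨g, hg, hgdeg, hgC⟩ := hC.exists_generator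
  obtain ⟨h, hh, hhdeg, hhD⟩ := hD.exists_generator
  have hg0 : g ≠ 0 := ne_zero_of_dvd_ne_zero (monic_X_pow_sub_C lam m.succ_ne_zero).ne_zero hg
  have hh0 : h ≠ 0 := ne_zero_of_dvd_ne_zero (monic_X_pow_sub_C mu m.succ_ne_zero).ne_zero hh
  have hcop : IsCoprime g h :=
    ((isCoprime_X_pow_sub_C hlm).of_isCoprime_of_dvd_left hg).of_isCoprime_of_dvd_right hh
  refine eq_bot_iff.2 fun x hx => (Submodule.mem_bot F).2 ?_
  have hdvd : g * h ∣ toPoly x :=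
    hcop.mul_dvd ((hgC x).1 (Submodule.mem_inf.1 hx).1) ((hhD x).1 (Submodule.mem_inf.1 hx).2)
  refine toPoly_eq_zero_iff.1 (eq_zero_of_dvd_of_degree_lt hdvd ((degree_toPoly_lt x).trans_le ?_))
  rw [degree_mul, degree_eq_natDegree hg0, degree_eq_natDegree hh0]
  exact_mod_cast (by omega : m + 1 ≤ g.natDegree + h.natDegree)

section GaloisDual

variable {F : Type*} [Field F] {n : ℕ}

theorem euclideanDual_eq_orthogonal (C : Submodule F (Fin n → F)) :
    euclideanDual C = LinearMap.BilinForm.orthogonal (dotProductBilin F F) C :=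
  rfl

theorem finrank_add_finrank_euclideanDual (C : Submodule F (Fin n → F)) :
    finrank F C + finrank F (euclideanDual C) = n := by
  have hnd : (dotProductBilin F F : LinearMap.BilinForm F (Fin n → F)).Nondegenerate :=
    ⟨fun x hx => dotProduct_eq_zero x hx,
      fun y hy => dotProduct_eq_zero y fun x => dotProduct_comm y x ▸ hy x⟩
  rw [euclideanDual_eq_orthogonal, LinearMap.BilinForm.finrank_orthogonal hnd, finrank_fin_fun]
  have := C.finrank_le
  rw [finrank_fin_fun] at this
  omega

variable (p k : ℕ) [Fact p.Prime] [CharP F p]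

theorem galoisDual_eq_comap (C : Submodule F (Fin n → F)) :
    galoisDual p k C = (euclideanDual C).comap (frobPowMap p k F n) :=
  rfl

theorem finrank_galoisDual [Finite F] (C : Submodule F (Fin n → F)) :
    finrank F (galoisDual p k C) = finrank F (euclideanDual C) := by
  have hbij : Function.Bijective (frobPowMap p k F n) :=
    Finite.injective_iff_bijective.1 fun x y hxy => funext fun i =>
      (iterateFrobenius F p k).injective (congrFun hxy i)
  have hcard : Nat.card (galoisDual p k C) = Nat.card (euclideanDual C) := by
    rw [galoisDual_eq_comap]
    exact Nat.card_congr ((Equiv.ofBijective _ hbij).subtypeEquiv fun _ => Iff.rfl)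
  rw [Module.natCard_eq_pow_finrank (K := F) (V := galoisDual p k C),
    Module.natCard_eq_pow_finrank (K := F) (V := euclideanDual C)] at hcard
  exact Nat.pow_right_injective Finite.one_lt_card hcard

end GaloisDual

theorem IsConstacyclic.galoisDual {p e k : ℕ} [Fact p.Prime] (hk : k ≤ e) {F : Type*} [Field F]
    [Fintype F] [CharP F p] (hF : Fintype.card F = p ^ e) {n : ℕ} {lam : F} (hlam : lam ≠ 0)
    {C : Submodule F (Fin n → F)} (hC : IsConstacyclic lam C) :
    IsConstacyclic (lam ^ p ^ (e - k))⁻¹ (galoisDual p k C) := by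
  obtain _ | m := n
  · exact fun x hx => by convert hx
  have hlm : lam * ((lam ^ p ^ (e - k))⁻¹) ^ p ^ k = 1 := by
    rw [inv_pow, ← pow_mul, ← pow_add, Nat.sub_add_cancel hk, ← hF, FiniteField.pow_card,
      mul_inv_cancel₀ hlam]
  intro x hx c hc
  obtain ⟨c', hc', rfl⟩ := hC.exists_constaShift_eq hlam hc
  exact (sum_constaShift_mul_constaShift_pow hlm c' x).trans (hx c' hc')

theorem constacyclic_isGaloisLCD_general
    (p e k : ℕ) [Fact p.Prime] (hk : k < e)
    (F : Type*) [Field F] [Fintype F] [CharP F p]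
    (hF : Fintype.card F = p ^ e)
    {n : ℕ}
    (lam : F) (hlam : lam ≠ 0)
    (h1 : lam ^ (1 + p ^ (e - k)) ≠ 1)
    (C : Submodule F (Fin n → F)) (hC : IsConstacyclic lam C) :
    IsGaloisLCD p k C := by
  have hlm : lam ≠ (lam ^ p ^ (e - k))⁻¹ := fun h =>
    h1 (by rw [pow_add, pow_one]; exact (mul_eq_one_iff_eq_inv₀ (pow_ne_zero _ hlam)).2 h)
  refine hC.inf_eq_bot hlm (hC.galoisDual hk.le hF hlam) (le_of_eq ?_)
  rw [finrank_galoisDual, finrank_add_finrank_euclideanDual]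

/-- Let `λ ∈ F_q^*` be a primitive `r`-th root of unity (`q = p^e`, `0 ≤ k < e`,
`gcd(n,q) = 1`).  If `λ^{1+p^{e-k}} ≠ 1` then every `λ`-constacyclic code `C` of
length `n` over `F_q` is a `k`-Galois LCD code. -/
theorem constacyclic_isGaloisLCD
    (p e k : ℕ) [Fact p.Prime] (hk : k < e)
    (F : Type*) [Field F] [Fintype F] [CharP F p]
    (hF : Fintype.card F = p ^ e)
    {n : ℕ} (hn : Nat.Coprime n (p ^ e))
    (r : ℕ) (lam : F) (hlam : lam ≠ 0) (hr : orderOf lam = r)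
    (h1 : lam ^ (1 + p ^ (e - k)) ≠ 1)
    (C : Submodule F (Fin n → F)) (hC : IsConstacyclic lam C) :
    IsGaloisLCD p k C :=
  constacyclic_isGaloisLCD_general p e k hk F hF lam hlam h1 C hC
end

section
/- Let q = p^e with e ≥ 2 and p a prime with p ≡ 3 (mod 4), and take k = 1. Then for every integer l with 1 ≤ l ≤ (p-3)/4 there exists a negacyclic code over F_q that is a 1-Galois LCD MDS code with length (p-1)/2, dimension (p-1)/2 - 2l + 1, and minimum Hamming distance 2l. -/
open Finset

/-!
Take `β ∈ 𝔽_p ⊆ F` of order `p - 1 = 2n`, where `n = (p - 1) / 2`. The odd powers `β^(2i+1)`,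
`i < n`, are the `n` roots of `X^n + 1`; the code consists of the polynomials of degree `< n`
vanishing at the `2l - 1` consecutive roots with `s ≤ i < s + 2l - 1`, `2s + 2l - 1 = n`.
It is negacyclic because its zeros are roots of `X^n + 1`. Consecutive zeros in geometric
progression give the BCH bound `d ≥ 2l`, and the Singleton bound gives `d ≤ 2l`.
Since the window of zeros is centred, the zero set is closed under inversion, and since
`β ∈ 𝔽_p` all roots are fixed by Frobenius. So every root `γ` of `X^n + 1` is either a zero of
the code or gives the codeword `(γ^j)_j`, and pairing against these codewords shows that every
codeword in `C ∩ C^{⊥₁}` vanishes at all `n` roots, hence is zero (Vandermonde).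
-/

section

open Matrix

variable {F : Type*} [Field F]

def parityCheck (n : ℕ) {m : ℕ} (z : Fin m → F) : Matrix (Fin m) (Fin n) F :=
  Matrix.of fun t j => z t ^ (j : ℕ)

/-- Words `x` whose polynomial `∑ j, x j * X ^ j` vanishes at every `z t`. -/
def vanishingCode (n : ℕ) {m : ℕ} (z : Fin m → F) : Submodule F (Fin n → F) :=
  LinearMap.ker (parityCheck n z).mulVecLin

theorem mem_vanishingCode {n m : ℕ} {z : Fin m → F} {x : Fin n → F} :
    x ∈ vanishingCode n z ↔ ∀ t, ∑ j : Fin n, z t ^ (j : ℕ) * x j = 0 := by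
  simp [vanishingCode, parityCheck, funext_iff, Matrix.mulVec, dotProduct]

theorem sum_pow_mul_constacyclicShift {N : ℕ} (lam z : F) (c : Fin (N + 1) → F) :
    ∑ j : Fin (N + 1), z ^ (j : ℕ) * (if (j : ℕ) = 0 then lam * c ⟨N + 1 - 1, by omega⟩
      else c ⟨(j : ℕ) - 1, by omega⟩)
      = z * ∑ j : Fin (N + 1), z ^ (j : ℕ) * c j + (lam - z ^ (N + 1)) * c (Fin.last N) := by
  rw [Fin.sum_univ_succ, Fin.sum_univ_castSucc, mul_add, mul_sum]
  simp only [Fin.val_zero, pow_zero, one_mul, if_true, Fin.val_succ, Nat.add_sub_cancel,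
    Nat.add_one_ne_zero, if_false, Fin.val_castSucc, Fin.val_last, pow_succ', mul_assoc]
  change lam * c (Fin.last N) + ∑ j : Fin N, z * (z ^ (j : ℕ) * c j.castSucc) = _
  ring

theorem isConstacyclic_vanishingCode {n m : ℕ} {lam : F} {z : Fin m → F}
    (hz : ∀ t, z t ^ n = lam) : IsConstacyclic lam (vanishingCode n z) := by
  intro c hc
  rcases n with _ | N
  · convert hc using 1
  rw [mem_vanishingCode] at hc ⊢
  intro t
  rw [sum_pow_mul_constacyclicShift, hc t, hz t]
  ring

theorem det_parityCheck_geom_submatrix_ne_zero {n m : ℕ} {a ω : F} (ha : a ≠ 0)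
    (hn : n ≤ orderOf ω) {κ : Fin m → Fin n} (hκ : Function.Injective κ) :
    ((parityCheck n fun t : Fin m => a * ω ^ (t : ℕ)).submatrix id κ).det ≠ 0 := by
  have hinj : Function.Injective fun s => ω ^ (κ s : ℕ) := fun s s' h =>
    hκ (Fin.val_injective (pow_injOn_Iio_orderOf (by simp; omega) (by simp; omega) h))
  have hfactor : (parityCheck n fun t : Fin m => a * ω ^ (t : ℕ)).submatrix id κ =
      (vandermonde fun s => ω ^ (κ s : ℕ))ᵀ * diagonal fun s => a ^ (κ s : ℕ) := by
    ext t s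
    simp [parityCheck, Matrix.vandermonde, Matrix.mul_diagonal]
    ring
  rw [hfactor, Matrix.det_mul, Matrix.det_transpose, Matrix.det_diagonal]
  exact mul_ne_zero (Matrix.det_vandermonde_ne_zero_iff.mpr hinj)
    (prod_ne_zero_iff.mpr fun s _ => pow_ne_zero _ ha)

theorem rank_parityCheck_geom {n m : ℕ} {a ω : F} (ha : a ≠ 0) (hmn : m ≤ n)
    (hn : n ≤ orderOf ω) : (parityCheck n fun t : Fin m => a * ω ^ (t : ℕ)).rank = m := by
  refine le_antisymm (Matrix.rank_le_height _) ?_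
  calc m = ((parityCheck n fun t : Fin m => a * ω ^ (t : ℕ)).submatrix id
        (Fin.castLE hmn)).rank := by
        rw [Matrix.rank_of_isUnit, Fintype.card_fin]
        exact (Matrix.isUnit_iff_isUnit_det _).mpr
          (det_parityCheck_geom_submatrix_ne_zero ha hn (Fin.castLE_injective hmn)).isUnit
    _ ≤ _ := Matrix.rank_submatrix_le _ _ _

theorem finrank_vanishingCode_geom {n m : ℕ} {a ω : F} (ha : a ≠ 0) (hmn : m ≤ n)
    (hn : n ≤ orderOf ω) :
    Module.finrank F (vanishingCode n fun t : Fin m => a * ω ^ (t : ℕ)) = n - m := by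
  have h := LinearMap.finrank_range_add_finrank_ker
    (parityCheck n fun t : Fin m => a * ω ^ (t : ℕ)).mulVecLin
  rw [← Matrix.rank, rank_parityCheck_geom ha hmn hn, Module.finrank_fin_fun] at h
  rw [vanishingCode]
  omega

theorem le_hammingNorm_of_mem_vanishingCode_geom [DecidableEq F] {n m : ℕ} {a ω : F}
    (ha : a ≠ 0) (hmn : m ≤ n) (hn : n ≤ orderOf ω) {x : Fin n → F}
    (hx : x ∈ vanishingCode n fun t : Fin m => a * ω ^ (t : ℕ)) (hx0 : x ≠ 0) :
    m + 1 ≤ hammingNorm x := by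
  by_contra! hlt
  obtain ⟨T, hsupp, hT⟩ := exists_superset_card_eq (s := univ.filter (x · ≠ 0))
    (Nat.lt_succ_iff.mp hlt) (by simpa using hmn)
  set κ := T.orderEmbOfFin hT
  have hκT : ∀ j, x j ≠ 0 → ∃ s, κ s = j := fun j hj => by
    simpa [κ, ← Set.mem_range, range_orderEmbOfFin] using hsupp (by simpa using hj)
  have hrestrict :
      (parityCheck n fun t : Fin m => a * ω ^ (t : ℕ)).submatrix id κ *ᵥ (x ∘ κ) = 0 := by
    funext t
    rw [mem_vanishingCode] at hx
    calc _ = ∑ j ∈ T, (a * ω ^ (t : ℕ)) ^ (j : ℕ) * x j := by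
          rw [← map_orderEmbOfFin_univ T hT, sum_map]
          rfl
      _ = ∑ j : Fin n, (a * ω ^ (t : ℕ)) ^ (j : ℕ) * x j := by
          refine sum_subset (subset_univ T) fun j _ hj => ?_
          have hxj : x j = 0 := by_contra fun h => hj (hsupp (by simpa using h))
          rw [hxj, mul_zero]
      _ = 0 := hx t
  have hxκ := Matrix.eq_zero_of_mulVec_eq_zero
    (det_parityCheck_geom_submatrix_ne_zero ha hn κ.injective) hrestrict
  refine hx0 (funext fun j => by_contra fun hj => ?_)
  obtain ⟨s, rfl⟩ := hκT j hj
  exact hj (congrFun hxκ s)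

theorem exists_mem_ne_zero_hammingNorm_le_of_finrank_pos [DecidableEq F] {n : ℕ}
    (C : Submodule F (Fin n → F)) (hC : 0 < Module.finrank F C) :
    ∃ x ∈ C, x ≠ 0 ∧ hammingNorm x ≤ n + 1 - Module.finrank F C := by
  set k := Module.finrank F C
  have hkn : k ≤ n := by simpa using Submodule.finrank_le C
  let π : C →ₗ[F] Fin (k - 1) → F :=
    (LinearMap.funLeft F F (Fin.castLE (by omega : k - 1 ≤ n))).comp C.subtype
  obtain ⟨y, hyπ, hy0⟩ := (Submodule.ne_bot_iff _).mp
    (LinearMap.ker_ne_bot_of_finrank_lt (f := π) (by simp; omega))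
  refine ⟨y, y.2, by simpa using hy0, ?_⟩
  have hsupp : univ.filter (fun j => (y : Fin n → F) j ≠ 0) ⊆ Ici ⟨k - 1, by omega⟩ := by
    intro j hj
    rw [mem_Ici, Fin.le_def]
    by_contra! hjk
    have := congrFun (LinearMap.mem_ker.mp hyπ) ⟨j, hjk⟩
    exact (mem_filter.mp hj).2 this
  calc hammingNorm (y : Fin n → F) ≤ #(Ici (⟨k - 1, by omega⟩ : Fin n)) := card_le_card hsupp
    _ = n + 1 - k := by rw [Fin.card_Ici]; simp only; omega

theorem isMinDist_vanishingCode_geom [DecidableEq F] {n m : ℕ} {a ω : F} (ha : a ≠ 0)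
    (hmn : m < n) (hn : n ≤ orderOf ω) :
    IsMinDist (vanishingCode n fun t : Fin m => a * ω ^ (t : ℕ)) (m + 1) := by
  have hk := finrank_vanishingCode_geom ha hmn.le hn
  obtain ⟨x, hxC, hx0, hx⟩ := exists_mem_ne_zero_hammingNorm_le_of_finrank_pos
    (vanishingCode n fun t : Fin m => a * ω ^ (t : ℕ)) (by omega)
  exact ⟨⟨x, hxC, hx0, le_antisymm (by omega)
    (le_hammingNorm_of_mem_vanishingCode_geom ha hmn.le hn hxC hx0)⟩,
    fun y hy hy0 => le_hammingNorm_of_mem_vanishingCode_geom ha hmn.le hn hy hy0⟩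

theorem sum_fin_pow_eq_zero {ζ : F} {n : ℕ} (hζn : ζ ^ n = 1) (hζ : ζ ≠ 1) :
    ∑ j : Fin n, ζ ^ (j : ℕ) = 0 := by
  rw [Fin.sum_univ_eq_sum_range (ζ ^ ·), geom_sum_eq hζ, hζn, sub_self, zero_div]

theorem isGaloisLCD_of_forall_eval {p k n : ℕ} [Fact p.Prime] [CharP F p]
    {C : Submodule F (Fin n → F)} {w : Fin n → F} (hw : Function.Injective w)
    (hfrob : ∀ i, w i ^ p ^ k = w i)
    (hC : ∀ i, (∀ x ∈ C, ∑ j : Fin n, w i ^ (j : ℕ) * x j = 0) ∨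
      (fun j : Fin n => w i ^ (j : ℕ)) ∈ C) :
    IsGaloisLCD p k C := by
  rw [IsGaloisLCD, Submodule.eq_bot_iff]
  rintro x ⟨hxC, hxdual⟩
  have heval : ∀ i, ∑ j : Fin n, w i ^ (j : ℕ) * x j = 0 := by
    intro i
    rcases hC i with hzero | hmem
    · exact hzero x hxC
    · have hfrobSum : (∑ j : Fin n, w i ^ (j : ℕ) * x j) ^ p ^ k = 0 := by
        rw [sum_pow_char_pow]
        simpa only [mul_pow, pow_right_comm _ _ (p ^ k), hfrob] using hxdual _ hmem
      exact pow_eq_zero_iff (pow_ne_zero _ (Fact.out : p.Prime).ne_zero) |>.mp hfrobSum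
  exact Matrix.eq_zero_of_mulVec_eq_zero (Matrix.det_vandermonde_ne_zero_iff.mpr hw)
    (funext fun i => by simpa [Matrix.vandermonde, Matrix.mulVec, dotProduct] using heval i)

theorem orderOf_sq_of_orderOf_eq_two_mul {β : F} {n : ℕ} (hβ : orderOf β = 2 * n) :
    orderOf (β ^ 2) = n := by
  rw [orderOf_pow_of_dvd two_ne_zero (by rw [hβ]; exact dvd_mul_right 2 n), hβ]
  omega

theorem powers_mem_vanishingCode_symm {n s m i : ℕ} {β : F} (hβ : orderOf β = 2 * n)
    (hsm : 2 * s + m = n) (hin : i < n) (hi : ¬(s ≤ i ∧ i < s + m)) :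
    (fun j : Fin n => (β ^ (2 * i + 1)) ^ (j : ℕ)) ∈
      vanishingCode n fun t : Fin m => β ^ (2 * (s + t) + 1) := by
  have hω := orderOf_sq_of_orderOf_eq_two_mul hβ
  refine mem_vanishingCode.mpr fun t => ?_
  have hprod : β ^ (2 * (s + (t : ℕ)) + 1) * β ^ (2 * i + 1) = (β ^ 2) ^ (s + t + i + 1) := by
    ring
  simp_rw [← mul_pow, hprod]
  have hωn : (β ^ 2) ^ n = 1 := hω ▸ pow_orderOf_eq_one (β ^ 2)
  refine sum_fin_pow_eq_zero (by rw [pow_right_comm, hωn, one_pow]) ?_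
  rw [Ne, ← orderOf_dvd_iff_pow_eq_one, hω]
  rintro ⟨c, hc⟩
  have := t.isLt
  -- `c = 1` would put `i = n - 1 - (s + t)` inside the window, which is centred in `[0, n)`
  rcases c with _ | _ | c
  · omega
  · omega
  · nlinarith

theorem isGaloisLCD_vanishingCode_symm {p k n s m : ℕ} [Fact p.Prime] [CharP F p] {β : F}
    (hβ : orderOf β = 2 * n) (hfrob : β ^ p ^ k = β) (hsm : 2 * s + m = n) :
    IsGaloisLCD p k (vanishingCode n fun t : Fin m => β ^ (2 * (s + t) + 1)) := by
  refine isGaloisLCD_of_forall_eval (w := fun i : Fin n => β ^ (2 * (i : ℕ) + 1)) ?_ ?_ ?_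
  · intro i i' h
    have := pow_injOn_Iio_orderOf (x := β) (by simp [hβ]; omega) (by simp [hβ]; omega) h
    exact Fin.ext (by omega)
  · intro i
    rw [pow_right_comm, hfrob]
  intro i
  by_cases hi : s ≤ i ∧ i < s + m
  · left
    intro x hx
    simpa [Nat.add_sub_cancel' hi.1] using mem_vanishingCode.mp hx ⟨i - s, by omega⟩
  · exact Or.inr (powers_mem_vanishingCode_symm hβ hsm i.isLt hi)

theorem pow_eq_neg_one_of_orderOf_eq_two_mul {β : F} {n : ℕ} (hn : n ≠ 0)
    (hβ : orderOf β = 2 * n) : β ^ n = -1 :=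
  ((IsPrimitiveRoot.orderOf β).pow (by omega) (by rw [hβ, mul_comm])).eq_neg_one_of_two_right

theorem exists_orderOf_eq_sub_one_of_charP (p : ℕ) [Fact p.Prime] [CharP F p] :
    ∃ β : F, orderOf β = p - 1 ∧ ∀ k, β ^ p ^ k = β := by
  obtain ⟨g, hg⟩ := IsCyclic.exists_ofOrder_eq_natCard (α := (ZMod p)ˣ)
  have hg' : orderOf (g : ZMod p) = p - 1 := by
    rw [orderOf_units, hg, Nat.card_eq_fintype_card, ZMod.card_units]
  let ι := ZMod.castHom (dvd_refl p) F
  refine ⟨ι g, hg' ▸ orderOf_injective ι.toMonoidHom ι.injective g,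
    fun k => by rw [← map_pow, ZMod.pow_card_pow]⟩

end

theorem exists_negacyclic_galoisLCD_MDS_three_mod_four_general
    (p : ℕ) [Fact p.Prime] (hp : p % 4 = 3)
    (F : Type*) [Field F] [DecidableEq F] [CharP F p]
    {l : ℕ} (hl1 : 1 ≤ l) (hl2 : l ≤ (p - 3) / 4) :
    ∃ C : Submodule F (Fin ((p - 1) / 2) → F),
      IsConstacyclic (-1 : F) C ∧ IsGaloisLCD p 1 C ∧
      Module.finrank F C = (p - 1) / 2 - 2 * l + 1 ∧ IsMinDist C (2 * l) := by
  obtain ⟨β, hβ, hfrob⟩ := exists_orderOf_eq_sub_one_of_charP (F := F) p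
  set n := (p - 1) / 2
  set s := n / 2 + 1 - l
  have hβn : orderOf β = 2 * n := by omega
  have hgeom : (fun t : Fin (2 * l - 1) => β ^ (2 * (s + t) + 1)) =
      fun t : Fin (2 * l - 1) => β ^ (2 * s + 1) * (β ^ 2) ^ (t : ℕ) := funext fun t => by ring
  have ha : β ^ (2 * s + 1) ≠ 0 := pow_ne_zero _ (by rintro rfl; simp at hβ; omega)
  have hω : n ≤ orderOf (β ^ 2) := (orderOf_sq_of_orderOf_eq_two_mul hβn).ge
  refine ⟨vanishingCode n fun t : Fin (2 * l - 1) => β ^ (2 * (s + t) + 1), ?_, ?_, ?_, ?_⟩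
  · refine isConstacyclic_vanishingCode fun t => ?_
    rw [pow_right_comm, pow_eq_neg_one_of_orderOf_eq_two_mul (by omega) hβn,
      Odd.neg_one_pow ⟨_, rfl⟩]
  · exact isGaloisLCD_vanishingCode_symm hβn (hfrob 1) (by omega)
  · rw [hgeom, finrank_vanishingCode_geom ha (by omega) hω]
    omega
  · rw [hgeom, show 2 * l = 2 * l - 1 + 1 by omega]
    exact isMinDist_vanishingCode_geom ha (by omega) hω

/-- Let `q = p^e` with `e ≥ 2` and `p ≡ 3 (mod 4)` a prime, and take `k = 1`.  For every
`1 ≤ l ≤ (p-3)/4` there exists a negacyclic code over `F_q` that is a `1`-Galois LCD MDS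
code of length `(p-1)/2`, dimension `(p-1)/2 - 2l + 1` and minimum distance `2l`. -/
theorem exists_negacyclic_galoisLCD_MDS_three_mod_four
    (p e : ℕ) [Fact p.Prime] (he : 2 ≤ e) (hp : p % 4 = 3)
    (F : Type*) [Field F] [Fintype F] [DecidableEq F] [CharP F p]
    (hF : Fintype.card F = p ^ e)
    {l : ℕ} (hl1 : 1 ≤ l) (hl2 : l ≤ (p - 3) / 4) :
    ∃ C : Submodule F (Fin ((p - 1) / 2) → F),
      IsConstacyclic (-1 : F) C ∧ IsGaloisLCD p 1 C ∧
      Module.finrank F C = (p - 1) / 2 - 2 * l + 1 ∧ IsMinDist C (2 * l) :=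
  exists_negacyclic_galoisLCD_MDS_three_mod_four_general p hp F hl1 hl2
end
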